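/- arXiv:1409.7600 — 2 statements merged into one kernel-verified Lean document; each statement's English description precedes it below -/
import Mathlib

section
/- Let H₁ and H₂ be complex Hilbert spaces and B : H₁ × H₂ → ℂ a bounded sesquilinear form that is coercive in the sense that there exists λ > 0 with sup_{w ∈ H₁, w ≠ 0} |B(w,v)|/‖w‖ ≥ λ‖v‖ for all v ∈ H₂, and sup_{w ∈ H₂, w ≠ 0} |B(u,w)|/‖w‖ ≥ λ‖u‖ for all u ∈ H₁. Then for every bounded linear functional T on H₂ there exists a unique u_T ∈ H₁ such that B(v, u_T) = conj(T(v)) for all v ∈ H₂, and moreover ‖u_T‖_{H₁} ≤ (1/λ)‖T‖. -/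
/-!
Riesz representation turns `w ↦ B(w, ·)` into a bounded operator `R : H₂ → H₁` with
`B(w, u) = ⟪R w, u⟫ = ⟪w, R† u⟫`. Coercivity in the first variable says `λ‖u‖ ≤ ‖R† u‖`, so `R†`
is injective with closed range; coercivity in the second says `λ‖w‖ ≤ ‖R w‖`, so
`(range R†)ᗮ = ker R = 0` and `R†` is onto. The equation `B(v, u) = conj (T v)` for all `v` reads
`R† u = t`, where `t` is the Riesz representative of `T`, and `λ‖u‖ ≤ ‖R† u‖ = ‖t‖ = ‖T‖`.
-/

open scoped ComplexConjugate InnerProductSpace InnerProduct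
open InnerProductSpace

section

variable {𝕜 E F : Type*} [RCLike 𝕜]
  [NormedAddCommGroup E] [InnerProductSpace 𝕜 E] [NormedAddCommGroup F] [InnerProductSpace 𝕜 F]

theorem sSup_div_norm_le {f : F → ℝ} {M : ℝ} (hM : 0 ≤ M) (hf : ∀ w, f w ≤ M * ‖w‖) :
    sSup {c : ℝ | ∃ w : F, w ≠ 0 ∧ c = f w / ‖w‖} ≤ M := by
  refine Real.sSup_le ?_ hM
  rintro c ⟨w, hw, rfl⟩
  exact (div_le_iff₀ (norm_pos_iff.mpr hw)).mpr (hf w)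

namespace ContinuousLinearMap

theorem antilipschitz_of_bounded_below (A : E →L[𝕜] F) {c : ℝ} (hc : 0 < c)
    (hA : ∀ x, c * ‖x‖ ≤ ‖A x‖) : AntilipschitzWith (Real.toNNReal c)⁻¹ A :=
  A.antilipschitz_of_bound fun x => by
    rw [NNReal.coe_inv, Real.coe_toNNReal _ hc.le, inv_mul_eq_div, le_div_iff₀ hc, mul_comm]
    exact hA x

theorem bijective_of_bounded_below_of_adjoint_bounded_below [CompleteSpace E] [CompleteSpace F]
    (A : E →L[𝕜] F) {c : ℝ} (hc : 0 < c) (hA : ∀ x, c * ‖x‖ ≤ ‖A x‖)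
    (hA' : ∀ y, c * ‖y‖ ≤ ‖(A†) y‖) : Function.Bijective A := by
  have hanti := A.antilipschitz_of_bounded_below hc hA
  refine ⟨hanti.injective, ?_⟩
  have : CompleteSpace A.range :=
    (hanti.isClosed_range A.uniformContinuous).completeSpace_coe
  have hker : A†.ker = ⊥ :=
    LinearMap.ker_eq_bot_of_injective (A†.antilipschitz_of_bounded_below hc hA').injective
  refine LinearMap.range_eq_top.mp (Submodule.orthogonal_eq_bot_iff.mp ?_)
  exact A.orthogonal_range.trans hker

noncomputable def ofSesqForm [CompleteSpace E] (B : F →L⋆[𝕜] E →L[𝕜] 𝕜) : F →L[𝕜] E :=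
  (toDual 𝕜 E).symm.toContinuousLinearEquiv.toContinuousLinearMap.comp B

@[simp]
theorem inner_ofSesqForm_apply [CompleteSpace E] (B : F →L⋆[𝕜] E →L[𝕜] 𝕜) (w : F) (u : E) :
    ⟪ofSesqForm B w, u⟫_𝕜 = B w u := by
  simp [ofSesqForm]

end ContinuousLinearMap

theorem eq_toDual_symm_iff [CompleteSpace F] {x : F} {T : StrongDual 𝕜 F} :
    x = (toDual 𝕜 F).symm T ↔ ∀ v, ⟪v, x⟫_𝕜 = conj (T v) := by
  rw [eq_comm, LinearIsometryEquiv.symm_apply_eq, ContinuousLinearMap.ext_iff]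
  refine forall_congr' fun v => ?_
  rw [toDual_apply_apply, ← inner_conj_symm, starRingEnd_apply, starRingEnd_apply,
    eq_star_iff_eq_star]

end

/-- (Babuška–Lax–Milgram.)  Let `H₁, H₂` be complex Hilbert spaces and
`B` a bounded sesquilinear form (conjugate-linear in its `H₂`-variable, linear in its
`H₁`-variable, matching the convention `B(w,v) = ⟨∇w, A∇v⟩` of the paper) which is
coercive in the sense that `sup_{w ≠ 0} |B(w,v)|/‖w‖ ≥ λ‖v‖` in each variable, for
some `λ > 0`.  Then for every bounded linear functional `T` on `H₂` there is a unique
`u_T ∈ H₁` with `B(v, u_T) = conj (T v)` for all `v ∈ H₂`, and `‖u_T‖ ≤ (1/λ)‖T‖`. -/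
theorem stmt2 {H₁ H₂ : Type*}
    [NormedAddCommGroup H₁] [InnerProductSpace ℂ H₁] [CompleteSpace H₁]
    [NormedAddCommGroup H₂] [InnerProductSpace ℂ H₂] [CompleteSpace H₂]
    (B : H₂ → H₁ → ℂ)
    (hadd₁ : ∀ w w' u, B (w + w') u = B w u + B w' u)
    (hsmul₁ : ∀ (c : ℂ) w u, B (c • w) u = (starRingEnd ℂ) c * B w u)
    (hadd₂ : ∀ w u u', B w (u + u') = B w u + B w u')
    (hsmul₂ : ∀ (c : ℂ) w u, B w (c • u) = c * B w u)
    (Λ : ℝ) (hbound : ∀ w u, ‖B w u‖ ≤ Λ * ‖w‖ * ‖u‖)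
    (lam : ℝ) (hlam : 0 < lam)
    (hcoer₁ : ∀ u : H₁, lam * ‖u‖ ≤ sSup {c : ℝ | ∃ w : H₂, w ≠ 0 ∧ c = ‖B w u‖ / ‖w‖})
    (hcoer₂ : ∀ w : H₂, lam * ‖w‖ ≤ sSup {c : ℝ | ∃ u : H₁, u ≠ 0 ∧ c = ‖B w u‖ / ‖u‖}) :
    ∀ T : H₂ →L[ℂ] ℂ,
      (∃! u : H₁, ∀ v : H₂, B v u = (starRingEnd ℂ) (T v)) ∧
      (∀ u : H₁, (∀ v : H₂, B v u = (starRingEnd ℂ) (T v)) → ‖u‖ ≤ (1 / lam) * ‖T‖) := by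
  intro T
  let R := ContinuousLinearMap.ofSesqForm <| LinearMap.mkContinuous₂
    (LinearMap.mk₂'ₛₗ (starRingEnd ℂ) (RingHom.id ℂ) B hadd₁ hsmul₁ hadd₂ hsmul₂) Λ hbound
  have hR : ∀ w u, ⟪R w, u⟫_ℂ = B w u := ContinuousLinearMap.inner_ofSesqForm_apply _
  have hR' : ∀ w u, ⟪w, (R†) u⟫_ℂ = B w u := fun w u => by
    rw [ContinuousLinearMap.adjoint_inner_right, hR]
  have below₁ : ∀ u, lam * ‖u‖ ≤ ‖(R†) u‖ := fun u =>
    (hcoer₁ u).trans <| sSup_div_norm_le (norm_nonneg _) fun w => by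
      rw [← hR', mul_comm]; exact norm_inner_le_norm w _
  have below₂ : ∀ w, lam * ‖w‖ ≤ ‖R w‖ := fun w =>
    (hcoer₂ w).trans <| sSup_div_norm_le (norm_nonneg _) fun u => by
      rw [← hR]; exact norm_inner_le_norm _ u
  have hsolve : ∀ u, (∀ v, B v u = conj (T v)) ↔ (R†) u = (toDual ℂ H₂).symm T := fun u => by
    simp only [eq_toDual_symm_iff, hR']
  have hbij := (R†).bijective_of_bounded_below_of_adjoint_bounded_below hlam below₁
    (by rwa [ContinuousLinearMap.adjoint_adjoint])
  refine ⟨?_, fun u hu => ?_⟩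
  · simpa only [hsolve] using hbij.existsUnique ((toDual ℂ H₂).symm T)
  · have hnorm : ‖(R†) u‖ = ‖T‖ := by rw [(hsolve u).mp hu, LinearIsometryEquiv.norm_map]
    rw [one_div, inv_mul_eq_div, le_div_iff₀ hlam, mul_comm, ← hnorm]
    exact below₁ u
end

section
/- Let 0 < p₀ < q ≤ ∞, x₀ ∈ ℝ^d, R > 0, and let u ∈ L^q(B(x₀,R)). Suppose there are constants C₀, F ≥ 0 such that for all 0 < ρ < r < R, (∫_{B(x₀,ρ)} |u|^q)^{1/q} ≤ C₀ (r-ρ)^{-(d/p₀ - d/q)} (∫_{B(x₀,r)} |u|^{p₀})^{1/p₀} + F. Then for every 0 < p ≤ p₀ there is a constant C(p,q) depending only on p, p₀, q, C₀ such that for all 0 < ρ < r < R, (∫_{B(x₀,ρ)} |u|^q)^{1/q} ≤ C(p,q) (r-ρ)^{-(d/p - d/q)} (∫_{B(x₀,r)} |u|^p)^{1/p} + C(p,q) F. -/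
/-!
Interpolating `‖u‖_{p₀} ≤ ‖u‖_p ^ τ ‖u‖_q ^ (1 - τ)` (Hölder, with
`1/p₀ = τ/p + (1-τ)/q`) into the hypothesis and applying Young's inequality gives,
for `ρ ≤ s < t < r` and `α = d/p - d/q`,
`‖u‖_{L^q(B_s)} ≤ θ ‖u‖_{L^q(B_t)} + K (t - s)^{-α} ‖u‖_{L^p(B_r)} + F`
with `θ` as small as we like. Iterating this along the radii `r - (r - ρ)/2ⁿ` with
`θ 2^α ≤ 1/2` produces a convergent geometric series, and the finiteness of
`‖u‖_{L^q(B_R)}` kills the remainder `θⁿ ‖u‖_{L^q(B_{sₙ})}`.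
-/

open MeasureTheory Metric ENNReal
open Filter Topology Set

namespace ENNReal

theorem rpow_mul_rpow_one_sub_le_add (a b : ℝ≥0∞) {τ : ℝ} (h0 : 0 ≤ τ) (h1 : τ ≤ 1) :
    a ^ τ * b ^ (1 - τ) ≤ a + b :=
  calc a ^ τ * b ^ (1 - τ)
      ≤ (a + b) ^ τ * (a + b) ^ (1 - τ) := by gcongr <;> simp
    _ = a + b := by rw [← rpow_add_of_nonneg _ _ h0 (sub_nonneg.2 h1)]; norm_num

theorem tsum_pow_le_two {x : ℝ≥0∞} (hx : x ≤ 2⁻¹) : ∑' k : ℕ, x ^ k ≤ 2 :=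
  calc ∑' k : ℕ, x ^ k ≤ ∑' k : ℕ, (2⁻¹ : ℝ≥0∞) ^ k := by gcongr
    _ = 2 := by rw [tsum_geometric, one_sub_inv_two, inv_inv]

end ENNReal

theorem le_tsum_pow_mul_of_le_mul_add {g a : ℕ → ℝ≥0∞} {θ M : ℝ≥0∞} (hθ : θ < 1) (hM : M ≠ ∞)
    (hgM : ∀ n, g n ≤ M) (h : ∀ n, g n ≤ θ * g (n + 1) + a n) :
    g 0 ≤ ∑' k, θ ^ k * a k := by
  have hunroll : ∀ n, g 0 ≤ θ ^ n * g n + ∑ k ∈ Finset.range n, θ ^ k * a k := by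
    intro n
    induction n with
    | zero => simp
    | succ n ih =>
      calc g 0 ≤ θ ^ n * g n + ∑ k ∈ Finset.range n, θ ^ k * a k := ih
        _ ≤ θ ^ n * (θ * g (n + 1) + a n) + ∑ k ∈ Finset.range n, θ ^ k * a k := by
          gcongr; exact h n
        _ = θ ^ (n + 1) * g (n + 1) + ∑ k ∈ Finset.range (n + 1), θ ^ k * a k := by
          rw [Finset.sum_range_succ]; ring
  have hlim : Tendsto (fun n : ℕ => θ ^ n * M + ∑' k, θ ^ k * a k) atTop
      (𝓝 (0 * M + ∑' k, θ ^ k * a k)) :=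
    (ENNReal.Tendsto.mul_const (ENNReal.tendsto_pow_atTop_nhds_zero_of_lt_one hθ)
      (Or.inr hM)).add_const _
  rw [zero_mul, zero_add] at hlim
  refine ge_of_tendsto' hlim fun n => (hunroll n).trans ?_
  gcongr
  · exact hgM n
  · exact ENNReal.sum_le_tsum _

theorem le_of_forall_le_mul_add_div_rpow {f : ℝ → ℝ≥0∞} {ρ r α A : ℝ} {θ M X B : ℝ≥0∞}
    (hρr : ρ < r) (hα : 0 ≤ α) (hθ : θ * ENNReal.ofReal (2 ^ α) ≤ 2⁻¹) (hM : M ≠ ∞)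
    (hfM : ∀ s ∈ Ico ρ r, f s ≤ M)
    (h : ∀ s t, ρ ≤ s → s < t → t < r →
      f s ≤ θ * f t + ENNReal.ofReal (A / (t - s) ^ α) * X + B) :
    f ρ ≤ ENNReal.ofReal (2 ^ (α + 1) * A / (r - ρ) ^ α) * X + 2 * B := by
  set δ := r - ρ
  have hδ0 : 0 < δ := sub_pos.2 hρr
  set κ := ENNReal.ofReal (2 ^ α)
  set c := ENNReal.ofReal (A / δ ^ α) * X
  set s : ℕ → ℝ := fun n => r - δ / 2 ^ n
  have hs_mem : ∀ n, s n ∈ Ico ρ r := fun n => by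
    have : δ / 2 ^ n ≤ δ := div_le_self hδ0.le (one_le_pow₀ one_le_two)
    constructor <;> simp only [s] <;> [linarith; exact sub_lt_self _ (by positivity)]
  have hs_gap : ∀ n, s (n + 1) - s n = δ / 2 ^ (n + 1) := fun n => by
    simp only [s, pow_succ]; field_simp; ring
  have hs_lt : ∀ n, s n < s (n + 1) := fun n => sub_pos.1 (by rw [hs_gap]; positivity)
  have hcoef : ∀ n, ENNReal.ofReal (A / (s (n + 1) - s n) ^ α) * X = c * κ ^ (n + 1) := fun n => by
    rw [hs_gap, Real.div_rpow hδ0.le (by positivity), ← Real.rpow_pow_comm zero_le_two,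
      div_div_eq_mul_div, mul_div_right_comm, ENNReal.ofReal_mul' (by positivity),
      ENNReal.ofReal_pow (by positivity)]
    ring
  have hκ : 1 ≤ κ := ENNReal.one_le_ofReal.2 (Real.one_le_rpow one_le_two hα)
  have hθ_half : θ ≤ 2⁻¹ := le_trans (le_mul_of_one_le_right' hκ) hθ
  have hiter : f (s 0) ≤ ∑' k, θ ^ k * (c * κ ^ (k + 1) + B) :=
    le_tsum_pow_mul_of_le_mul_add (hθ_half.trans_lt (by norm_num)) hM (fun n => hfM _ (hs_mem n))
      fun n => by rw [← add_assoc, ← hcoef]; exact h _ _ (hs_mem n).1 (hs_lt n) (hs_mem (n + 1)).2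
  have hs0 : s 0 = ρ := by simp [s, δ]
  calc f ρ ≤ ∑' k, θ ^ k * (c * κ ^ (k + 1) + B) := hs0 ▸ hiter
    _ = c * κ * ∑' k : ℕ, (θ * κ) ^ k + B * ∑' k : ℕ, θ ^ k := by
      rw [← ENNReal.tsum_mul_left, ← ENNReal.tsum_mul_left, ← ENNReal.tsum_add]
      congr 1 with k
      ring
    _ ≤ c * κ * 2 + B * 2 := by
      gcongr
      · exact ENNReal.tsum_pow_le_two hθ
      · exact ENNReal.tsum_pow_le_two hθ_half
    _ = ENNReal.ofReal (2 ^ (α + 1) * A / δ ^ α) * X + 2 * B := by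
      rw [Real.rpow_add_one two_ne_zero, mul_assoc, mul_div_assoc,
        ENNReal.ofReal_mul (by positivity), ENNReal.ofReal_mul (by positivity)]
      simp only [c, κ, ENNReal.ofReal_ofNat]
      ring

theorem eLpNorm_le_eLpNorm_rpow_mul_eLpNorm_rpow {α E : Type*} [MeasurableSpace α]
    {μ : Measure α} [NormedAddCommGroup E] {f : α → E} (hf : AEStronglyMeasurable f μ)
    {p q r : ℝ≥0∞} {τ : ℝ} (hτ0 : 0 < τ) (hτ1 : τ ≤ 1)
    (hr : r⁻¹ = ENNReal.ofReal τ / p + ENNReal.ofReal (1 - τ) / q) :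
    eLpNorm f r μ ≤ eLpNorm f p μ ^ τ * eLpNorm f q μ ^ (1 - τ) := by
  obtain rfl | hτ1 := hτ1.eq_or_lt
  · rw [sub_self, ENNReal.ofReal_zero, ENNReal.zero_div, add_zero, ENNReal.ofReal_one, one_div,
      inv_inj] at hr
    simp [hr]
  have hτ : ENNReal.ofReal τ ≠ 0 := by simpa using hτ0
  have hτ' : ENNReal.ofReal (1 - τ) ≠ 0 := by simpa using hτ1
  have : HolderTriple (p / ENNReal.ofReal τ) (q / ENNReal.ofReal (1 - τ)) r :=
    ⟨by rw [hr, ENNReal.inv_div (by simp) (by simp [hτ]),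
      ENNReal.inv_div (by simp) (by simp [hτ'])]⟩
  calc eLpNorm f r μ = eLpNorm (fun x => ‖f x‖ ^ τ * ‖f x‖ ^ (1 - τ)) r μ := by
        refine eLpNorm_congr_norm_ae (ae_of_all _ fun x => ?_)
        rw [← Real.rpow_add' (norm_nonneg _) (by simp), add_sub_cancel, Real.rpow_one,
          Real.norm_of_nonneg (by positivity)]
    _ ≤ (1 : NNReal) * eLpNorm (fun x => ‖f x‖ ^ τ) (p / ENNReal.ofReal τ) μ *
          eLpNorm (fun x => ‖f x‖ ^ (1 - τ)) (q / ENNReal.ofReal (1 - τ)) μ :=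
        eLpNorm_le_eLpNorm_mul_eLpNorm'_of_norm
          (hf.norm.aemeasurable.pow_const _).aestronglyMeasurable
          (hf.norm.aemeasurable.pow_const _).aestronglyMeasurable
          (· * ·) 1 (ae_of_all _ fun x => by simp [norm_mul])
    _ = eLpNorm f p μ ^ τ * eLpNorm f q μ ^ (1 - τ) := by
      rw [eLpNorm_norm_rpow _ hτ0, eLpNorm_norm_rpow _ (sub_pos.2 hτ1),
        ENNReal.div_mul_cancel hτ ofReal_ne_top, ENNReal.div_mul_cancel hτ' ofReal_ne_top]
      simp

theorem exists_interpolation_exponent {p p₀ : ℝ} {q : ℝ≥0∞} (hp : 0 < p) (hpp₀ : p ≤ p₀)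
    (hq : ENNReal.ofReal p₀ < q) :
    ∃ τ : ℝ, 0 < τ ∧ τ ≤ 1 ∧
      (ENNReal.ofReal p₀)⁻¹ = ENNReal.ofReal τ / ENNReal.ofReal p + ENNReal.ofReal (1 - τ) / q ∧
      q.toReal⁻¹ ≤ p⁻¹ ∧ τ * (p⁻¹ - q.toReal⁻¹) = p₀⁻¹ - q.toReal⁻¹ := by
  have hp₀ : 0 < p₀ := hp.trans_le hpp₀
  set β := q.toReal⁻¹
  have hβ : 0 ≤ β := by positivity
  have hβp₀ : β < p₀⁻¹ := by
    obtain rfl | hq_top := eq_or_ne q ∞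
    · simpa [β] using hp₀
    exact inv_strictAnti₀ hp₀ ((ofReal_lt_iff_lt_toReal hp₀.le hq_top).1 hq)
  have hp₀p : p₀⁻¹ ≤ p⁻¹ := inv_anti₀ hp hpp₀
  have hq_inv : q⁻¹ = ENNReal.ofReal β := by
    rw [← ofReal_toReal (inv_ne_top.2 (pos_of_gt hq).ne'), toReal_inv]
  set τ := (p₀⁻¹ - β) / (p⁻¹ - β)
  have hτ : τ * (p⁻¹ - β) = p₀⁻¹ - β := div_mul_cancel₀ _ (by linarith)
  have hτ0 : 0 < τ := by apply div_pos <;> linarith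
  have hτ1 : τ ≤ 1 := div_le_one_of_le₀ (by linarith) (by linarith)
  refine ⟨τ, hτ0, hτ1, ?_, by linarith, hτ⟩
  · rw [ENNReal.div_eq_inv_mul, ENNReal.div_eq_inv_mul, hq_inv, ← ofReal_inv_of_pos hp,
      ← ofReal_inv_of_pos hp₀, ← ofReal_mul (by positivity), ← ofReal_mul hβ,
      ← ofReal_add (by positivity) (mul_nonneg hβ (sub_nonneg.2 hτ1))]
    congr 1
    linear_combination -hτ

theorem le_mul_add_of_le_div_rpow_mul {a b c F : ℝ≥0∞} {C₀ θ τ α δ : ℝ} (hC₀ : 0 ≤ C₀)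
    (hθ : 0 < θ) (hτ0 : 0 < τ) (hτ1 : τ ≤ 1) (hδ : 0 < δ)
    (h : a ≤ ENNReal.ofReal (C₀ / δ ^ (α * τ)) * (b ^ τ * c ^ (1 - τ)) + F) :
    a ≤ ENNReal.ofReal θ * c + ENNReal.ofReal ((C₀ * θ ^ (τ - 1)) ^ τ⁻¹ / δ ^ α) * b + F := by
  set K := (C₀ * θ ^ (τ - 1)) ^ τ⁻¹
  have hK : K ^ τ * θ ^ (1 - τ) = C₀ := by
    rw [← Real.rpow_mul (by positivity), inv_mul_cancel₀ hτ0.ne', Real.rpow_one, mul_assoc,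
      ← Real.rpow_add hθ]
    simp
  have hcoef : ENNReal.ofReal (C₀ / δ ^ (α * τ)) =
      ENNReal.ofReal (K / δ ^ α) ^ τ * ENNReal.ofReal θ ^ (1 - τ) := by
    rw [ofReal_rpow_of_nonneg (by positivity) hτ0.le, ofReal_rpow_of_pos hθ,
      ← ofReal_mul (by positivity), Real.div_rpow (by positivity) (by positivity),
      ← Real.rpow_mul hδ.le, div_mul_eq_mul_div, hK]
  calc a ≤ ENNReal.ofReal (C₀ / δ ^ (α * τ)) * (b ^ τ * c ^ (1 - τ)) + F := h
    _ = (ENNReal.ofReal (K / δ ^ α) * b) ^ τ * (ENNReal.ofReal θ * c) ^ (1 - τ) + F := by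
      rw [hcoef, mul_rpow_of_nonneg _ _ hτ0.le, mul_rpow_of_nonneg _ _ (sub_nonneg.2 hτ1)]
      ring
    _ ≤ ENNReal.ofReal (K / δ ^ α) * b + ENNReal.ofReal θ * c + F := by
      gcongr
      exact rpow_mul_rpow_one_sub_le_add _ _ hτ0.le hτ1
    _ = ENNReal.ofReal θ * c + ENNReal.ofReal (K / δ ^ α) * b + F := by ring

/-- `2⁻¹ * (2 ^ α)⁻¹` is the weight `θ` that Young's inequality leaves on the absorbed term;
`2 ^ (α + 1)` comes from summing over the dyadic radii. -/
noncomputable def selfImprovementConst (α τ C₀ : ℝ) : ℝ :=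
  2 ^ (α + 1) * (C₀ * (2⁻¹ * (2 ^ α)⁻¹) ^ (τ - 1)) ^ τ⁻¹

theorem eLpNorm_le_of_reverseHolder {X E : Type*} [MeasurableSpace X] [NormedAddCommGroup E]
    {ν : ℝ → Measure X} (hν : Monotone ν) {u : X → E} {p p₀ q : ℝ≥0∞} {τ α C₀ ρ r : ℝ}
    {F : ℝ≥0∞} (hτ0 : 0 < τ) (hτ1 : τ ≤ 1)
    (hp₀ : p₀⁻¹ = ENNReal.ofReal τ / p + ENNReal.ofReal (1 - τ) / q) (hα : 0 ≤ α)
    (hC₀ : 0 ≤ C₀) (hρr : ρ < r) (hu : MemLp u q (ν r))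
    (h : ∀ s t, ρ ≤ s → s < t → t < r →
      eLpNorm u q (ν s) ≤ ENNReal.ofReal (C₀ / (t - s) ^ (α * τ)) * eLpNorm u p₀ (ν t) + F) :
    eLpNorm u q (ν ρ) ≤
      ENNReal.ofReal (selfImprovementConst α τ C₀ / (r - ρ) ^ α) * eLpNorm u p (ν r) + 2 * F := by
  set θ : ℝ := 2⁻¹ * (2 ^ α)⁻¹
  have hθ : ENNReal.ofReal θ * ENNReal.ofReal (2 ^ α) ≤ 2⁻¹ := by
    rw [← ofReal_mul (by positivity), mul_assoc, inv_mul_cancel₀ (by positivity), mul_one,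
      ofReal_inv_of_pos two_pos, ofReal_ofNat]
  refine le_of_forall_le_mul_add_div_rpow (f := fun s => eLpNorm u q (ν s)) hρr hα hθ hu.2.ne
    (fun s hs => eLpNorm_mono_measure _ (hν hs.2.le)) fun s t hs hst htr => ?_
  have hinterp : eLpNorm u p₀ (ν t) ≤ eLpNorm u p (ν t) ^ τ * eLpNorm u q (ν t) ^ (1 - τ) :=
    eLpNorm_le_eLpNorm_rpow_mul_eLpNorm_rpow (hu.1.mono_measure (hν htr.le)) hτ0 hτ1 hp₀
  calc eLpNorm u q (ν s)
      ≤ ENNReal.ofReal θ * eLpNorm u q (ν t) +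
          ENNReal.ofReal ((C₀ * θ ^ (τ - 1)) ^ τ⁻¹ / (t - s) ^ α) * eLpNorm u p (ν t) + F :=
        le_mul_add_of_le_div_rpow_mul hC₀ (by positivity) hτ0 hτ1 (sub_pos.2 hst)
          ((h s t hs hst htr).trans (by gcongr))
    _ ≤ _ := by gcongr; exact hν htr.le

theorem stmt5_general (d : ℕ) (p₀ p : ℝ) (q : ℝ≥0∞) (hq : ENNReal.ofReal p₀ < q)
    (hp : 0 < p) (hpp₀ : p ≤ p₀) (C₀ : ℝ) (hC₀ : 0 < C₀) :
    ∃ C : ℝ, 0 < C ∧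
      ∀ (x₀ : EuclideanSpace ℝ (Fin d)) (R : ℝ), 0 < R →
        ∀ u : EuclideanSpace ℝ (Fin d) → ℂ,
          MemLp u q (volume.restrict (ball x₀ R)) →
          ∀ F : ℝ≥0∞,
            (∀ ρ r : ℝ, 0 < ρ → ρ < r → r < R →
              eLpNorm u q (volume.restrict (ball x₀ ρ)) ≤
                ENNReal.ofReal (C₀ / (r - ρ) ^ ((d : ℝ) / p₀ - (d : ℝ) / q.toReal)) *
                  eLpNorm u (ENNReal.ofReal p₀) (volume.restrict (ball x₀ r)) + F) →
            ∀ ρ r : ℝ, 0 < ρ → ρ < r → r < R →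
              eLpNorm u q (volume.restrict (ball x₀ ρ)) ≤
                ENNReal.ofReal (C / (r - ρ) ^ ((d : ℝ) / p - (d : ℝ) / q.toReal)) *
                  eLpNorm u (ENNReal.ofReal p) (volume.restrict (ball x₀ r))
                  + ENNReal.ofReal C * F := by
  obtain ⟨τ, hτ0, hτ1, hτ_exp, hqp, hτ⟩ := exists_interpolation_exponent hp hpp₀ hq
  set α := (d : ℝ) / p - (d : ℝ) / q.toReal
  have hα : 0 ≤ α := by
    simp only [α, div_eq_mul_inv (d : ℝ), ← mul_sub]
    exact mul_nonneg d.cast_nonneg (sub_nonneg.2 hqp)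
  have hατ : α * τ = (d : ℝ) / p₀ - (d : ℝ) / q.toReal := by
    simp only [α, div_eq_mul_inv (d : ℝ)]
    linear_combination (d : ℝ) * hτ
  refine ⟨max (selfImprovementConst α τ C₀) 2, lt_max_of_lt_right two_pos, ?_⟩
  intro x₀ R _ u hu F hyp ρ r hρ hρr hrR
  have hball : Monotone fun s => volume.restrict (ball x₀ s) :=
    fun s t hst => Measure.restrict_mono (ball_subset_ball hst) le_rfl
  refine (eLpNorm_le_of_reverseHolder hball hτ0 hτ1 hτ_exp hα hC₀.le hρr
    (hu.mono_measure (hball hrR.le))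
    fun s t hs hst htr => hατ ▸ hyp s t (hρ.trans_le hs) hst (htr.trans hrR)).trans ?_
  gcongr
  · exact le_max_left _ _
  · exact ofReal_ofNat 2 ▸ ofReal_le_ofReal (le_max_right _ _)

/-- (Self-improvement of reverse Hölder inequalities; Lemma 4.4 of the
paper.)  Let `0 < p₀ < q ≤ ∞` and suppose `u ∈ L^q(B(x₀,R))` satisfies, for all
`0 < ρ < r < R`,
`‖u‖_{L^q(B(x₀,ρ))} ≤ C₀ (r-ρ)^{-(d/p₀ - d/q)} ‖u‖_{L^{p₀}(B(x₀,r))} + F`.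
Then for every `0 < p ≤ p₀` there is `C = C(p,p₀,q,C₀)` such that for all
`0 < ρ < r < R`,
`‖u‖_{L^q(B(x₀,ρ))} ≤ C (r-ρ)^{-(d/p - d/q)} ‖u‖_{L^p(B(x₀,r))} + C F`.
(The convention `d/q = 0` for `q = ∞` is realized via `q.toReal = 0`.) -/
theorem stmt5 (d : ℕ) (p₀ p : ℝ) (q : ℝ≥0∞) (hp₀ : 0 < p₀) (hq : ENNReal.ofReal p₀ < q)
    (hp : 0 < p) (hpp₀ : p ≤ p₀) (C₀ : ℝ) (hC₀ : 0 < C₀) :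
    ∃ C : ℝ, 0 < C ∧
      ∀ (x₀ : EuclideanSpace ℝ (Fin d)) (R : ℝ), 0 < R →
        ∀ u : EuclideanSpace ℝ (Fin d) → ℂ,
          MemLp u q (volume.restrict (ball x₀ R)) →
          ∀ F : ℝ≥0∞,
            (∀ ρ r : ℝ, 0 < ρ → ρ < r → r < R →
              eLpNorm u q (volume.restrict (ball x₀ ρ)) ≤
                ENNReal.ofReal (C₀ / (r - ρ) ^ ((d : ℝ) / p₀ - (d : ℝ) / q.toReal)) *
                  eLpNorm u (ENNReal.ofReal p₀) (volume.restrict (ball x₀ r)) + F) →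
            ∀ ρ r : ℝ, 0 < ρ → ρ < r → r < R →
              eLpNorm u q (volume.restrict (ball x₀ ρ)) ≤
                ENNReal.ofReal (C / (r - ρ) ^ ((d : ℝ) / p - (d : ℝ) / q.toReal)) *
                  eLpNorm u (ENNReal.ofReal p) (volume.restrict (ball x₀ r))
                  + ENNReal.ofReal C * F :=
  stmt5_general d p₀ p q hq hp hpp₀ C₀ hC₀
end
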